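/- For every prime p with p ≡ 1 (mod 3) and for each k ∈ {2, 3}, there exist integers u and v with gcd(u, v) = 1 such that u² + 27v² = 4 · 3^k · p³. -/

import Mathlib

/-!
Write `p = a² + 3b²`: a square root of `-3` modulo `p` comes from a primitive cube root of unity
`ζ` as `2ζ + 1`, and Thue's pigeonhole lemma turns it into a small multiple `m p = x² + 3y²`,
`m < 4`, which reduces to `m = 1`. The element `t + y√-3 = (1 + √-3)(a + b√-3)³` has norm
`t² + 3y² = 4p³`. A common prime factor of `t` and `y` divides `4p³`; it is not `2` because `y` is
odd, and not `p` because `y - t ≡ -48b³ (mod p)` while `p ∤ b`. Moreover `t ≡ y ≡ a³ ≢ 0 (mod 3)`,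
so `(u, v) = (3t, y)` works for `k = 2` and `(9y, t)` for `k = 3`.
-/

theorem sq_two_mul_add_one_eq_neg_three {R : Type*} [CommRing R] [IsDomain R] {ζ : R}
    (h3 : ζ ^ 3 = 1) (h1 : ζ ≠ 1) : (2 * ζ + 1) ^ 2 = -3 := by
  have hζ : ζ ^ 2 + ζ + 1 = 0 := by
    have : (ζ - 1) * (ζ ^ 2 + ζ + 1) = 0 := by linear_combination h3
    exact (mul_eq_zero.mp this).resolve_left (sub_ne_zero.mpr h1)
  linear_combination 4 * hζ

theorem ZMod.exists_sq_eq_neg_three {p : ℕ} [Fact p.Prime] (hmod : p % 3 = 1) :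
    ∃ s : ZMod p, s ^ 2 = -3 := by
  have : Fact (Nat.Prime 3) := ⟨Nat.prime_three⟩
  have h3 : 3 ∣ Fintype.card (ZMod p)ˣ := by
    rw [ZMod.card_units_eq_totient, Nat.totient_prime Fact.out]
    omega
  obtain ⟨ζ, hζ⟩ := exists_prime_orderOf_dvd_card 3 h3
  refine ⟨2 * ζ + 1, sq_two_mul_add_one_eq_neg_three ?_ ?_⟩
  · rw [← Units.val_pow_eq_pow_val, ← hζ, pow_orderOf_eq_one, Units.val_one]
  · rw [Ne, Units.val_eq_one, ← orderOf_eq_one_iff, hζ]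
    norm_num

theorem ZMod.exists_abs_le_sqrt_intCast_eq_mul (n : ℕ) [NeZero n] (s : ZMod n) :
    ∃ x y : ℤ, (x ≠ 0 ∨ y ≠ 0) ∧ |x| ≤ n.sqrt ∧ |y| ≤ n.sqrt ∧ (x : ZMod n) = s * y := by
  have hcard : Fintype.card (ZMod n) < Fintype.card (Fin (n.sqrt + 1) × Fin (n.sqrt + 1)) := by
    simpa [ZMod.card, ← sq] using Nat.lt_succ_sqrt' n
  obtain ⟨⟨i, j⟩, ⟨i', j'⟩, hne, heq⟩ := Fintype.exists_ne_map_eq_of_card_lt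
    (fun ij : Fin (n.sqrt + 1) × Fin (n.sqrt + 1) => (ij.1 : ZMod n) - s * ij.2) hcard
  refine ⟨(i : ℤ) - i', (j : ℤ) - j', ?_, ?_, ?_, ?_⟩
  · by_contra! h
    exact hne (by rw [Prod.mk.injEq, Fin.ext_iff, Fin.ext_iff]; omega)
  · rw [abs_le]; omega
  · rw [abs_le]; omega
  · push_cast
    linear_combination heq

theorem Int.sq_add_three_mul_sq_ne_two_mul_of_odd (x y : ℤ) {n : ℤ} (hn : Odd n) :
    x ^ 2 + 3 * y ^ 2 ≠ 2 * n := by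
  obtain ⟨m, rfl⟩ := hn
  intro h
  have h4 := congrArg (fun z : ℤ => (z : ZMod 4)) h
  push_cast at h4
  have : ∀ a b c : ZMod 4, a ^ 2 + 3 * b ^ 2 ≠ 2 * (2 * c + 1) := by decide
  exact this _ _ _ h4

theorem Int.exists_sq_add_three_mul_sq_of_eq_three_mul {x y n : ℤ}
    (h : x ^ 2 + 3 * y ^ 2 = 3 * n) : ∃ a b : ℤ, a ^ 2 + 3 * b ^ 2 = n := by
  obtain ⟨c, rfl⟩ : 3 ∣ x := Int.prime_three.dvd_of_dvd_pow (n := 2) ⟨n - y ^ 2, by linarith⟩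
  exact ⟨y, c, by linarith⟩

theorem Nat.Prime.exists_sq_add_three_mul_sq {p : ℕ} (hp : p.Prime) (hmod : p % 3 = 1) :
    ∃ a b : ℤ, a ^ 2 + 3 * b ^ 2 = p := by
  have : Fact p.Prime := ⟨hp⟩
  obtain ⟨s, hs⟩ := ZMod.exists_sq_eq_neg_three hmod
  obtain ⟨x, y, hxy, hx, hy, hxs⟩ := ZMod.exists_abs_le_sqrt_intCast_eq_mul p s
  have hsqrt : p.sqrt ^ 2 < p := by
    refine lt_of_le_of_ne (Nat.sqrt_le' p) fun h => ?_
    exact hp.prime.not_isSquare ⟨p.sqrt, by rw [← sq, h]⟩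
  have hsqrt' : (p.sqrt : ℤ) ^ 2 < p := by exact_mod_cast hsqrt
  have hx2 : x ^ 2 < p := (sq_le_sq' (abs_le.mp hx).1 (abs_le.mp hx).2).trans_lt hsqrt'
  have hy2 : y ^ 2 < p := (sq_le_sq' (abs_le.mp hy).1 (abs_le.mp hy).2).trans_lt hsqrt'
  have hpos : 0 < x ^ 2 + 3 * y ^ 2 := by
    rcases hxy with h | h <;> positivity
  obtain ⟨m, hm⟩ : (p : ℤ) ∣ x ^ 2 + 3 * y ^ 2 := by
    rw [← ZMod.intCast_zmod_eq_zero_iff_dvd]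
    push_cast
    linear_combination (y : ZMod p) ^ 2 * hs + (x + s * y : ZMod p) * hxs
  have hp0 : (0 : ℤ) < p := by exact_mod_cast hp.pos
  obtain rfl | rfl | rfl : m = 1 ∨ m = 2 ∨ m = 3 := by
    have : 0 < m := pos_of_mul_pos_right (hm ▸ hpos) hp0.le
    have : m < 4 := by nlinarith
    omega
  · exact ⟨x, y, by linarith⟩
  · have hodd : Odd (p : ℤ) := by exact_mod_cast hp.odd_of_ne_two (by omega)
    exact absurd (hm.trans (mul_comm _ _)) (Int.sq_add_three_mul_sq_ne_two_mul_of_odd x y hodd)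
  · exact Int.exists_sq_add_three_mul_sq_of_eq_three_mul (hm.trans (mul_comm _ _))

/-- `cubeTwistRe a b + cubeTwistIm a b * √-3 = (1 + √-3) * (a + b * √-3) ^ 3`. -/
def cubeTwistRe (a b : ℤ) : ℤ := a ^ 3 - 9 * a ^ 2 * b - 9 * a * b ^ 2 + 9 * b ^ 3

def cubeTwistIm (a b : ℤ) : ℤ := a ^ 3 + 3 * a ^ 2 * b - 9 * a * b ^ 2 - 3 * b ^ 3

theorem sq_add_three_mul_sq_cubeTwist (a b : ℤ) :
    cubeTwistRe a b ^ 2 + 3 * cubeTwistIm a b ^ 2 = 4 * (a ^ 2 + 3 * b ^ 2) ^ 3 := by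
  unfold cubeTwistRe cubeTwistIm
  ring

theorem three_dvd_cubeTwistRe_iff (a b : ℤ) : 3 ∣ cubeTwistRe a b ↔ 3 ∣ a := by
  have h : cubeTwistRe a b = a ^ 3 + 3 * (-3 * a ^ 2 * b - 3 * a * b ^ 2 + 3 * b ^ 3) := by
    unfold cubeTwistRe; ring
  rw [h, dvd_add_left (dvd_mul_right 3 _), Int.prime_three.dvd_pow_iff_dvd three_ne_zero]

theorem three_dvd_cubeTwistIm_iff (a b : ℤ) : 3 ∣ cubeTwistIm a b ↔ 3 ∣ a := by
  have h : cubeTwistIm a b = a ^ 3 + 3 * (a ^ 2 * b - 3 * a * b ^ 2 - b ^ 3) := by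
    unfold cubeTwistIm; ring
  rw [h, dvd_add_left (dvd_mul_right 3 _), Int.prime_three.dvd_pow_iff_dvd three_ne_zero]

theorem odd_cubeTwistIm {a b : ℤ} (h : Odd (a ^ 2 + 3 * b ^ 2)) : Odd (cubeTwistIm a b) := by
  unfold cubeTwistIm
  simp only [parity_simps] at h ⊢
  tauto

theorem not_dvd_of_sq_add_three_mul_sq_eq_prime {p : ℕ} (hp : p.Prime) {a b : ℤ}
    (hab : a ^ 2 + 3 * b ^ 2 = p) : ¬ (p : ℤ) ∣ b := by
  rintro ⟨c, rfl⟩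
  rcases eq_or_ne c 0 with rfl | hc
  · exact hp.prime.not_isSquare
      ⟨a.natAbs, by zify; rw [abs_mul_abs_self, ← sq]; simpa using hab.symm⟩
  · have hp1 : (1 : ℤ) < p := by exact_mod_cast hp.one_lt
    have hc1 : (p : ℤ) ^ 2 ≤ (p * c) ^ 2 := by
      rw [mul_pow]
      exact le_mul_of_one_le_right (sq_nonneg _) (one_le_sq_iff_one_le_abs _ |>.mpr
        (Int.one_le_abs hc))
    nlinarith [sq_nonneg a]

theorem isCoprime_cubeTwist {p : ℕ} (hp : p.Prime) (hp2 : p ≠ 2) (hp3 : p ≠ 3) {a b : ℤ}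
    (hab : a ^ 2 + 3 * b ^ 2 = p) : IsCoprime (cubeTwistRe a b) (cubeTwistIm a b) := by
  set t := cubeTwistRe a b
  set y := cubeTwistIm a b
  have hy : Odd y := odd_cubeTwistIm (hab ▸ by exact_mod_cast hp.odd_of_ne_two hp2)
  rw [Int.isCoprime_iff_gcd_eq_one]
  refine Nat.coprime_of_dvd fun q hq hqt hqy => ?_
  rw [← Int.natCast_dvd] at hqt hqy
  have hqd : q ∣ 2 ^ 2 * p ^ 3 := by
    have : (q : ℤ) ∣ t ^ 2 + 3 * y ^ 2 :=
      dvd_add (dvd_pow hqt two_ne_zero) (dvd_mul_of_dvd_right (dvd_pow hqy two_ne_zero) 3)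
    rw [sq_add_three_mul_sq_cubeTwist, hab] at this
    exact_mod_cast this
  rcases (Nat.Prime.dvd_mul hq).mp hqd with h2 | hpq
  · obtain rfl := (Nat.prime_dvd_prime_iff_eq hq Nat.prime_two).mp (hq.dvd_of_dvd_pow h2)
    exact Int.not_even_iff_odd.mpr hy (even_iff_two_dvd.mpr hqy)
  · rw [(Nat.prime_dvd_prime_iff_eq hq hp).mp (hq.dvd_of_dvd_pow hpq)] at hqt hqy
    have h48 : (p : ℤ) ∣ 48 * b ^ 3 := by
      have : 48 * b ^ 3 = 12 * b * (a ^ 2 + 3 * b ^ 2) - (y - t) := by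
        simp only [t, y, cubeTwistRe, cubeTwistIm]; ring
      rw [this, hab]
      exact dvd_sub (dvd_mul_left _ _) (dvd_sub hqy hqt)
    have hp48 : IsCoprime (p : ℤ) 48 := Nat.isCoprime_iff_coprime.mpr <|
      Nat.Coprime.mul_right (((Nat.coprime_primes hp Nat.prime_two).2 hp2).pow_right 4)
        ((Nat.coprime_primes hp Nat.prime_three).2 hp3)
    exact not_dvd_of_sq_add_three_mul_sq_eq_prime hp hab
      ((Nat.prime_iff_prime_int.mp hp).dvd_of_dvd_pow (hp48.dvd_of_dvd_mul_left h48))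

/-- **Lemma.** For every prime `p ≡ 1 (mod 3)` and each `k ∈ {2, 3}`, there exist coprime
integers `u` and `v` such that `u² + 27v² = 4 · 3^k · p³`. -/
theorem exists_coprime_rep (p : ℕ) (hp : p.Prime) (hmod : p % 3 = 1)
    (k : ℕ) (hk : k = 2 ∨ k = 3) :
    ∃ u v : ℤ, Int.gcd u v = 1 ∧ u ^ 2 + 27 * v ^ 2 = 4 * 3 ^ k * (p : ℤ) ^ 3 := by
  obtain ⟨a, b, hab⟩ := hp.exists_sq_add_three_mul_sq hmod
  have h3a : ¬ 3 ∣ a := fun h => by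
    have : (3 : ℤ) ∣ p := hab ▸ dvd_add (dvd_pow h two_ne_zero) (dvd_mul_right 3 _)
    omega
  set t := cubeTwistRe a b
  set y := cubeTwistIm a b
  have hty : t ^ 2 + 3 * y ^ 2 = 4 * p ^ 3 := by rw [sq_add_three_mul_sq_cubeTwist, hab]
  have hco : IsCoprime t y := isCoprime_cubeTwist hp (by omega) (by omega) hab
  have h3t : IsCoprime 3 t :=
    Int.prime_three.coprime_iff_not_dvd.mpr (by rwa [three_dvd_cubeTwistRe_iff])
  have h3y : IsCoprime 3 y :=
    Int.prime_three.coprime_iff_not_dvd.mpr (by rwa [three_dvd_cubeTwistIm_iff])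
  rcases hk with rfl | rfl
  · exact ⟨3 * t, y, Int.isCoprime_iff_gcd_eq_one.mp (h3y.mul_left hco),
      by linear_combination 9 * hty⟩
  · have h9t : IsCoprime (9 : ℤ) t := by simpa using h3t.pow_left (m := 2)
    exact ⟨9 * y, t, Int.isCoprime_iff_gcd_eq_one.mp (h9t.mul_left hco.symm),
      by linear_combination 27 * hty⟩
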